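/- arXiv:0804.1644 — 2 statements merged into one kernel-verified Lean document; each statement's English description precedes it below -/
import Mathlib

section
/- Let R be an associative unital ℂ-algebra, q, p ∈ R with qp − pq = h·1 (h ∈ ℂ), q invertible, and a, b, t ∈ ℂ. Put H_IV = tqp − qp² − q²p + ap − bq, and set x = q⁻¹, y = −bq − q²p. Let H₂(x,y) = −x³y² + (−a−2b+2h)x²y − txy − b(a+b−h)x + y (normally ordered, x-powers to the left). Then [x, H_IV] = [x, H₂(x,y)] and [y, H_IV] = [y, H₂(x,y)]; that is, the quantum Painlevé IV system is transformed in the chart-2 coordinates into the polynomial Hamiltonian system with Hamiltonian H₂. -/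
/-!
The chart-2 coordinates are again canonical, `x * y - y * x = h`, and substituting
`q * p = -x y - b` and `p = -x² y - b x` (the term `-b q` cancels against `-q² p`) and
normal-ordering shows `H_IV = H₂ - t b`. The two Hamiltonians differ by a central scalar,
so they have the same commutators.
-/

section

variable {K R : Type*} [CommRing K] [Ring R] [Algebra K R]

theorem commutator_sub_smul_one (z w : R) (c : K) :
    z * (w - c • 1) - (w - c • 1) * z = z * w - w * z := by
  rw [mul_sub, sub_mul, mul_smul_one, smul_one_mul]
  abel

variable {q p x y : R} [Invertible q] {b h : K}

theorem chart2_momentum_eq (hx : x = ⅟q) (hy : y = -(b • q) - q ^ 2 * p) :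
    p = -(x ^ 2 * y) - b • x := by
  subst hx hy
  simp only [mul_sub, mul_neg, mul_smul_comm, pow_two, mul_assoc, invOf_mul_cancel_left,
    invOf_mul_self, mul_one]
  abel

theorem chart2_mul_momentum_eq (hx : x = ⅟q) (hy : y = -(b • q) - q ^ 2 * p) :
    q * p = -(x * y) - b • 1 := by
  subst hx hy
  simp only [mul_sub, mul_neg, mul_smul_comm, pow_two, mul_assoc, invOf_mul_cancel_left,
    invOf_mul_self]
  abel

theorem chart2_commutator (hcomm : q * p - p * q = h • 1) (hx : x = ⅟q)
    (hy : y = -(b • q) - q ^ 2 * p) : x * y - y * x = h • 1 := by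
  have hqpq : q * p * ⅟q = p + h • ⅟q := by
    rw [sub_eq_iff_eq_add] at hcomm
    rw [hcomm, add_mul, mul_invOf_cancel_right, smul_one_mul, add_comm]
  subst hx hy
  simp only [sub_mul, mul_sub, neg_mul, mul_neg, smul_mul_assoc, mul_smul_comm, pow_two,
    mul_assoc, invOf_mul_cancel_left, invOf_mul_self, mul_invOf_self, hqpq, mul_add]
  module

theorem hamiltonianPIV_eq_chart2 (t a : K) (hcomm : q * p - p * q = h • 1) (hx : x = ⅟q)
    (hy : y = -(b • q) - q ^ 2 * p) :
    t • (q * p) - q * p ^ 2 - q ^ 2 * p + a • p - b • q =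
      -(x ^ 3 * y ^ 2) + (-a - 2 * b + 2 * h) • (x ^ 2 * y) - t • (x * y)
        - (b * (a + b - h)) • x + y - (t * b) • 1 := by
  have hxy := chart2_commutator hcomm hx hy
  calc t • (q * p) - q * p ^ 2 - q ^ 2 * p + a • p - b • q
      = t • (q * p) - q * p * p + a • p + (-(b • q) - q ^ 2 * p) := by noncomm_ring
    _ = t • (-(x * y) - b • 1) - (-(x * y) - b • 1) * (-(x ^ 2 * y) - b • x)
          + a • (-(x ^ 2 * y) - b • x) + y := by
        rw [← hy, chart2_mul_momentum_eq hx hy, ← chart2_momentum_eq hx hy]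
    _ = _ := by
        -- move `y` to the right of `x` in `x y x² y` and in `x y x`
        linear_combination (norm := skip) x * hxy * x * y + x * x * hxy * y + b • (x * hxy)
        simp only [mul_add, mul_sub, sub_mul, mul_neg, neg_mul, pow_succ, pow_zero, one_mul,
          smul_mul_assoc, mul_smul_comm, mul_assoc, mul_one]
        module

end

/-- In the Takano chart-2 coordinates `x = q⁻¹`, `y = -bq - q²p`, the quantum
Painlevé IV system becomes the polynomial Hamiltonian system with
`H₂ = -x³y² + (-a-2b+2h)x²y - txy - b(a+b-h)x + y`. -/
theorem quantum_PIV_chart2_hamiltonian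
    {R : Type*} [Ring R] [Algebra ℂ R]
    (h a b t : ℂ) (q p : R) [Invertible q]
    (hcomm : q * p - p * q = h • (1 : R))
    (H x y H₂ : R)
    (hH : H = t • (q * p) - q * p ^ 2 - q ^ 2 * p + a • p - b • q)
    (hx : x = ⅟q) (hy : y = -(b • q) - q ^ 2 * p)
    (hH₂ : H₂ = -(x ^ 3 * y ^ 2) + (-a - 2 * b + 2 * h) • (x ^ 2 * y)
        - t • (x * y) - (b * (a + b - h)) • x + y) :
    x * H - H * x = x * H₂ - H₂ * x ∧
    y * H - H * y = y * H₂ - H₂ * y := by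
  have hH_eq : H = H₂ - (t * b) • 1 := by
    rw [hH, hH₂, hamiltonianPIV_eq_chart2 t a hcomm hx hy]
  rw [hH_eq]
  exact ⟨commutator_sub_smul_one x H₂ (t * b), commutator_sub_smul_one y H₂ (t * b)⟩
end

section
/- Let R be an associative unital ℂ-algebra, q, p ∈ R with qp − pq = h·1 (h ∈ ℂ), and suppose p is invertible in R. For a parameter c ∈ ℂ, set x = cp − qp² + p² and y = p⁻¹. Then xy − yx = h·1; i.e., the Takano chart-3 change of variables for the quantum Painlevé V equation is a canonical transformation. -/
/-!
Both `c • p` and `p ^ 2` commute with `p⁻¹`, so only `-q p²` contributes to `[x, p⁻¹]`, and it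
contributes `-[q, p⁻¹] p²`. Conjugating `[q, p] = h` by `p⁻¹` gives `[q, p⁻¹] = -h p⁻²`.
-/

section

variable {K R : Type*} [CommSemiring K] [Ring R] [Algebra K R]

theorem mul_invOf_sub_invOf_mul (a p : R) [Invertible p] :
    a * ⅟p - ⅟p * a = ⅟p * (p * a - a * p) * ⅟p := by
  rw [mul_sub, sub_mul, ← mul_assoc, invOf_mul_self, one_mul, mul_assoc, mul_assoc,
    mul_invOf_self, mul_one]

theorem mul_mul_sub_mul_mul_of_commute {a b y : R} (hb : Commute b y) :
    a * b * y - y * (a * b) = (a * y - y * a) * b := by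
  rw [sub_mul, mul_assoc, hb.eq]
  simp only [mul_assoc]

theorem mul_invOf_sub_invOf_mul_of_mul_sub_mul_eq_smul_one {k : K} {q p : R} [Invertible p]
    (hcomm : q * p - p * q = k • (1 : R)) :
    q * ⅟p - ⅟p * q = -(k • ⅟p ^ 2) := by
  rw [mul_invOf_sub_invOf_mul, ← neg_sub, hcomm, mul_neg, neg_mul, mul_smul_comm, mul_one,
    smul_mul_assoc, sq]

end

/-- Takano chart-3 change of variables for quantum Painlevé V is canonical:
if `q p - p q = h • 1` and `p` is invertible, then with `x = cp - qp² + p²`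
and `y = p⁻¹` one has `x y - y x = h • 1`. -/
theorem quantum_PV_chart3_canonical
    {R : Type*} [Ring R] [Algebra ℂ R]
    (h c : ℂ) (q p : R) [Invertible p]
    (hcomm : q * p - p * q = h • (1 : R))
    (x y : R) (hx : x = c • p - q * p ^ 2 + p ^ 2) (hy : y = ⅟p) :
    x * y - y * x = h • (1 : R) := by
  subst hx hy
  have hcommute : Commute (c • p + p ^ 2) (⅟p) :=
    (((Commute.refl p).smul_left c).add_left ((Commute.refl p).pow_left 2)).invOf_right
  have hsq : Commute (p ^ 2) (⅟p) := ((Commute.refl p).pow_left 2).invOf_right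
  calc (c • p - q * p ^ 2 + p ^ 2) * ⅟p - ⅟p * (c • p - q * p ^ 2 + p ^ 2)
      = -(q * p ^ 2 * ⅟p - ⅟p * (q * p ^ 2)) := by
        rw [sub_add_eq_add_sub, sub_mul, mul_sub, hcommute.eq]; abel
    _ = -((q * ⅟p - ⅟p * q) * p ^ 2) := by rw [mul_mul_sub_mul_mul_of_commute hsq]
    _ = h • (1 : R) := by
        rw [mul_invOf_sub_invOf_mul_of_mul_sub_mul_eq_smul_one hcomm, neg_mul, neg_neg,
          smul_mul_assoc, ← invOf_pow, invOf_mul_self]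
end
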